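/- Variance bound for weighted sums of squares of correlated standard Gaussians: Let (Z_1,…,Z_n) be a centered jointly Gaussian vector with Var(Z_t) = 1 for all t and |Cov(Z_s, Z_t)| ≤ ρ(|s − t|) for a function ρ : ℕ → [0, ∞) with ρ²_∞ = ρ(0)² + 2Σ_{τ≥1}ρ(τ)² < ∞. Then for any real coefficients a_1,…,a_n with max_t |a_t| ≤ A: Var( n^{−1/2} Σ_{t=1}^{n} a_t Z_t² ) ≤ 2 A² ρ²_∞. -/

import Mathlib

/-!
The variance of `Σₜ aₜ Zₜ²` is `Σₛₜ aₛ aₜ Cov(Zₛ², Zₜ²)`, and for a centered Gaussian pair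
Isserlis' theorem gives `Cov(X², Y²) = 2 𝔼[XY]²`; it follows by polarization from
`𝔼[W⁴] = 3 𝔼[W²]²` for the Gaussians `W = X, Y, X + Y, X - Y`. Bounding `aₛ aₜ` by `A²` and
`𝔼[ZₛZₜ]²` by `ρ(|s - t|)²`, every row sum is at most `Σ_{τ ∈ ℤ} ρ(|τ|)² = ρ²_∞`, and the `n`
rows cancel the normalization `(√n)⁻²`.
-/

open MeasureTheory ProbabilityTheory Real
open scoped NNReal Nat

lemma integral_even_pow_mul_exp_neg_mul_sq {b : ℝ} (hb : 0 < b) (k : ℕ) :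
    ∫ x : ℝ, x ^ (2 * k) * exp (-b * x ^ 2) = b ^ (-(k + 1 / 2 : ℝ)) * Gamma (k + 1 / 2) := by
  have h := integral_rpow_mul_exp_neg_mul_rpow (q := ((2 * k : ℕ) : ℝ)) two_pos
    (by linarith [(by positivity : (0 : ℝ) ≤ (2 * k : ℕ))]) hb
  simp_rw [rpow_natCast, rpow_two] at h
  have habs := integral_comp_abs (f := fun x : ℝ => x ^ (2 * k) * exp (-b * x ^ 2))
  simp only [pow_mul, sq_abs] at habs h ⊢
  rw [habs, h]
  push_cast
  ring_nf

lemma integral_even_pow_gaussianReal_zero_one (k : ℕ) :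
    ∫ x, x ^ (2 * k) ∂gaussianReal 0 1 = (2 * k - 1 : ℕ)‼ := by
  have hpdf (x : ℝ) : gaussianPDFReal 0 1 x • x ^ (2 * k) =
      (√(2 * π))⁻¹ * (x ^ (2 * k) * exp (-(1 / 2) * x ^ 2)) := by
    simp only [gaussianPDFReal_def, smul_eq_mul, NNReal.coe_one, mul_one, sub_zero]
    ring_nf
  simp_rw [integral_gaussianReal_eq_integral_smul one_ne_zero, hpdf, integral_const_mul,
    integral_even_pow_mul_exp_neg_mul_sq one_half_pos, Gamma_nat_add_half]
  rw [rpow_neg one_half_pos.le, ← inv_rpow one_half_pos.le, inv_div, div_one, rpow_add two_pos,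
    rpow_natCast, ← sqrt_eq_rpow, sqrt_mul two_pos.le]
  field_simp

lemma gaussianReal_zero_one_map_sqrt_mul (v : ℝ≥0) :
    (gaussianReal 0 1).map (√v * ·) = gaussianReal 0 v := by
  rw [gaussianReal_map_const_mul, mul_zero, mul_one]
  congr 1
  ext
  simp [sq_sqrt v.coe_nonneg]

lemma integral_even_pow_gaussianReal (v : ℝ≥0) (k : ℕ) :
    ∫ x, x ^ (2 * k) ∂gaussianReal 0 v = v ^ k * (2 * k - 1 : ℕ)‼ := by
  rw [← gaussianReal_zero_one_map_sqrt_mul, integral_map (by fun_prop) (by fun_prop)]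
  simp_rw [mul_pow, pow_mul (√_), sq_sqrt v.coe_nonneg]
  rw [integral_const_mul, integral_even_pow_gaussianReal_zero_one]

namespace ProbabilityTheory

variable {Ω : Type*} [MeasurableSpace Ω] {μ : Measure Ω} {W X Y : Ω → ℝ} {m : ℝ} {v : ℝ≥0}

lemma hasLaw_of_map_eq {𝓧 : Type*} [MeasurableSpace 𝓧] {ν : Measure 𝓧} [NeZero ν] {V : Ω → 𝓧}
    (h : μ.map V = ν) : HasLaw V ν μ :=
  ⟨.of_map_ne_zero (h ▸ NeZero.ne ν), h⟩

lemma HasLaw.integrable_pow_of_gaussianReal (hW : HasLaw W (gaussianReal m v) μ) (k : ℕ) :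
    Integrable (fun ω ↦ W ω ^ k) μ := by
  have hk : Integrable (fun x : ℝ ↦ x ^ k) (gaussianReal m v) :=
    integrable_pow_of_mem_interior_integrableExpSet (X := id) (by simp) k
  rw [← hW.map_eq, integrable_map_measure (by fun_prop) hW.aemeasurable] at hk
  exact hk

lemma HasLaw.integral_even_pow_of_gaussianReal (hW : HasLaw W (gaussianReal 0 v) μ) (k : ℕ) :
    ∫ ω, W ω ^ (2 * k) ∂μ = v ^ k * (2 * k - 1 : ℕ)‼ :=
  (hW.integral_comp (f := fun x ↦ x ^ (2 * k)) (by fun_prop)).trans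
    (integral_even_pow_gaussianReal v k)

lemma HasLaw.integral_pow_four_of_gaussianReal (hW : HasLaw W (gaussianReal 0 v) μ) :
    ∫ ω, W ω ^ 4 ∂μ = 3 * (∫ ω, W ω ^ 2 ∂μ) ^ 2 := by
  have h4 := hW.integral_even_pow_of_gaussianReal 2
  have h2 := hW.integral_even_pow_of_gaussianReal 1
  norm_num at h4 h2
  rw [h4, h2]
  ring

theorem integral_sq_mul_sq_of_gaussian
    (h : ∀ s t : ℝ, ∃ v : ℝ≥0, μ.map (fun ω ↦ s * X ω + t * Y ω) = gaussianReal 0 v) :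
    ∫ ω, X ω ^ 2 * Y ω ^ 2 ∂μ =
      (∫ ω, X ω ^ 2 ∂μ) * (∫ ω, Y ω ^ 2 ∂μ) + 2 * (∫ ω, X ω * Y ω ∂μ) ^ 2 := by
  set G : ℝ → ℝ → Ω → ℝ := fun s t ω ↦ s * X ω + t * Y ω
  have hW (s t : ℝ) : ∃ v : ℝ≥0, HasLaw (G s t) (gaussianReal 0 v) μ :=
    (h s t).imp fun _ ↦ hasLaw_of_map_eq
  have hint (s t : ℝ) (k : ℕ) : Integrable (fun ω ↦ G s t ω ^ k) μ :=
    (hW s t).elim fun _ hv ↦ hv.integrable_pow_of_gaussianReal k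
  have hfour (s t : ℝ) : ∫ ω, G s t ω ^ 4 ∂μ = 3 * (∫ ω, G s t ω ^ 2 ∂μ) ^ 2 :=
    (hW s t).elim fun _ hv ↦ hv.integral_pow_four_of_gaussianReal
  have hXY : ∫ ω, X ω ^ 2 * Y ω ^ 2 ∂μ = (∫ ω, G 1 1 ω ^ 4 ∂μ + ∫ ω, G 1 (-1) ω ^ 4 ∂μ
      - 2 * ∫ ω, G 1 0 ω ^ 4 ∂μ - 2 * ∫ ω, G 0 1 ω ^ 4 ∂μ) / 12 := by
    rw [integral_congr_ae (g := fun ω ↦ (G 1 1 ω ^ 4 + G 1 (-1) ω ^ 4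
        - 2 * G 1 0 ω ^ 4 - 2 * G 0 1 ω ^ 4) / 12) (ae_of_all _ fun ω ↦ by simp only [G]; ring),
      integral_div]
    have := hint 1 1 4
    have := hint 1 (-1) 4
    have := hint 1 0 4
    have := hint 0 1 4
    rw [integral_sub (by fun_prop) (by fun_prop), integral_sub (by fun_prop) (by fun_prop),
      integral_add (by fun_prop) (by fun_prop), integral_const_mul, integral_const_mul]
  have hprod : ∫ ω, X ω * Y ω ∂μ = (∫ ω, G 1 1 ω ^ 2 ∂μ - ∫ ω, G 1 (-1) ω ^ 2 ∂μ) / 4 := by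
    rw [← integral_sub (hint 1 1 2) (hint 1 (-1) 2), ← integral_div]
    congr 1 with ω
    simp only [G]
    ring
  have hpar : ∫ ω, G 1 1 ω ^ 2 ∂μ + ∫ ω, G 1 (-1) ω ^ 2 ∂μ
      = 2 * ∫ ω, G 1 0 ω ^ 2 ∂μ + 2 * ∫ ω, G 0 1 ω ^ 2 ∂μ := by
    rw [← integral_const_mul, ← integral_const_mul, ← integral_add (hint 1 1 2) (hint 1 (-1) 2),
      ← integral_add ((hint 1 0 2).const_mul 2) ((hint 0 1 2).const_mul 2)]
    congr 1 with ω
    simp only [G]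
    ring
  have hX : ∫ ω, X ω ^ 2 ∂μ = ∫ ω, G 1 0 ω ^ 2 ∂μ := by simp [G]
  have hY : ∫ ω, Y ω ^ 2 ∂μ = ∫ ω, G 0 1 ω ^ 2 ∂μ := by simp [G]
  rw [hXY, hprod, hX, hY, hfour, hfour, hfour, hfour]
  linear_combination (∫ ω, G 1 1 ω ^ 2 ∂μ + ∫ ω, G 1 (-1) ω ^ 2 ∂μ
    + 2 * ∫ ω, G 1 0 ω ^ 2 ∂μ + 2 * ∫ ω, G 0 1 ω ^ 2 ∂μ) / 8 * hpar

lemma HasLaw.memLp_sq_of_gaussianReal (hW : HasLaw W (gaussianReal m v) μ) :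
    MemLp (fun ω ↦ W ω ^ 2) 2 μ := by
  refine (memLp_two_iff_integrable_sq (hW.aemeasurable.pow_const 2).aestronglyMeasurable).2 ?_
  simpa [← pow_mul] using hW.integrable_pow_of_gaussianReal 4

lemma covariance_sq_sq_of_gaussian [IsProbabilityMeasure μ]
    (h : ∀ s t : ℝ, ∃ v : ℝ≥0, μ.map (fun ω ↦ s * X ω + t * Y ω) = gaussianReal 0 v) :
    cov[fun ω ↦ X ω ^ 2, fun ω ↦ Y ω ^ 2; μ] = 2 * (∫ ω, X ω * Y ω ∂μ) ^ 2 := by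
  obtain ⟨_, hX⟩ := h 1 0
  obtain ⟨_, hY⟩ := h 0 1
  simp only [one_mul, zero_mul, add_zero, zero_add] at hX hY
  rw [covariance_eq_sub (hasLaw_of_map_eq hX).memLp_sq_of_gaussianReal
    (hasLaw_of_map_eq hY).memLp_sq_of_gaussianReal]
  simp only [Pi.mul_apply, integral_sq_mul_sq_of_gaussian h]
  ring

variable {ι : Type*} [Fintype ι] {Z : ι → Ω → ℝ}

lemma exists_map_mul_add_mul_eq_gaussianReal [DecidableEq ι]
    (hZ : ∀ a : ι → ℝ, ∃ v : ℝ≥0, μ.map (fun ω ↦ ∑ i, a i * Z i ω) = gaussianReal 0 v)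
    (i j : ι) (s t : ℝ) :
    ∃ v : ℝ≥0, μ.map (fun ω ↦ s * Z i ω + t * Z j ω) = gaussianReal 0 v := by
  obtain ⟨v, hv⟩ := hZ (s • Pi.single i 1 + t • Pi.single j 1)
  refine ⟨v, ?_⟩
  simpa [add_mul, Finset.sum_add_distrib, Pi.single_apply, mul_assoc] using hv

theorem variance_sum_mul_sq_of_gaussian [IsProbabilityMeasure μ]
    (hZ : ∀ a : ι → ℝ, ∃ v : ℝ≥0, μ.map (fun ω ↦ ∑ i, a i * Z i ω) = gaussianReal 0 v)
    (a : ι → ℝ) :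
    Var[fun ω ↦ ∑ i, a i * Z i ω ^ 2; μ] =
      2 * ∑ i, ∑ j, a i * a j * (∫ ω, Z i ω * Z j ω ∂μ) ^ 2 := by
  classical
  have hpair := exists_map_mul_add_mul_eq_gaussianReal hZ
  have hsq (i : ι) : MemLp (fun ω ↦ a i * Z i ω ^ 2) 2 μ := by
    obtain ⟨_, hi⟩ := hpair i i 1 0
    simp only [one_mul, zero_mul, add_zero] at hi
    exact (hasLaw_of_map_eq hi).memLp_sq_of_gaussianReal.const_mul (a i)
  rw [variance_fun_sum hsq]
  simp_rw [covariance_const_mul_left, covariance_const_mul_right,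
    covariance_sq_sq_of_gaussian (hpair _ _), Finset.mul_sum]
  ring_nf

end ProbabilityTheory

lemma hasSum_int_natAbs {f : ℕ → ℝ} (hf : Summable f) :
    HasSum (fun m : ℤ ↦ f m.natAbs) (f 0 + 2 * ∑' τ, f (τ + 1)) := by
  have hneg : (fun n : ℕ ↦ f (-((n : ℤ) + 1)).natAbs) = fun n ↦ f (n + 1) :=
    funext fun n ↦ congrArg f (by omega)
  have h := HasSum.of_nat_of_neg_add_one (f := fun m : ℤ ↦ f m.natAbs)
    (by simpa using hf.hasSum) (hneg ▸ ((summable_nat_add_iff 1).2 hf).hasSum)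
  rwa [hf.tsum_eq_zero_add, add_assoc, ← two_mul] at h

lemma sum_dist_le_tsum_int_natAbs {f : ℕ → ℝ} (hf : Summable f) (hf0 : ∀ τ, 0 ≤ f τ)
    (S : Finset ℕ) (s : ℕ) :
    ∑ t ∈ S, f (Nat.dist s t) ≤ ∑' m : ℤ, f m.natAbs := by
  have hinj : Set.InjOn (fun t : ℕ ↦ (t : ℤ) - s) S := fun _ _ _ _ h ↦ by simpa using h
  have hdist (t : ℕ) : Nat.dist s t = ((t : ℤ) - s).natAbs := by
    unfold Nat.dist; omega
  simp_rw [hdist]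
  rw [← Finset.sum_image (f := fun m : ℤ ↦ f m.natAbs) hinj]
  exact (hasSum_int_natAbs hf).summable.sum_le_tsum _ fun _ _ ↦ hf0 _

lemma sum_sum_mul_mul_sq_le {n : ℕ} {ρ : ℕ → ℝ} (hρ : Summable fun τ ↦ ρ τ ^ 2)
    {a : Fin n → ℝ} {A : ℝ} (hA : ∀ t, |a t| ≤ A)
    {c : Fin n → Fin n → ℝ} (hc : ∀ s t, |c s t| ≤ ρ (Nat.dist s t)) :
    ∑ s, ∑ t, a s * a t * c s t ^ 2 ≤ n * (A ^ 2 * (ρ 0 ^ 2 + 2 * ∑' τ, ρ (τ + 1) ^ 2)) := by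
  set R := ρ 0 ^ 2 + 2 * ∑' τ, ρ (τ + 1) ^ 2
  have hrow (s : Fin n) : ∑ t : Fin n, ρ (Nat.dist s t) ^ 2 ≤ R := by
    rw [Fin.sum_univ_eq_sum_range (fun t ↦ ρ (Nat.dist s t) ^ 2)]
    exact (sum_dist_le_tsum_int_natAbs hρ (fun _ ↦ sq_nonneg _) _ _).trans_eq
      (hasSum_int_natAbs hρ).tsum_eq
  have hterm (s t : Fin n) : a s * a t * c s t ^ 2 ≤ A ^ 2 * ρ (Nat.dist s t) ^ 2 := by
    have haa : a s * a t ≤ A ^ 2 :=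
      calc a s * a t ≤ |a s| * |a t| := abs_mul (a s) (a t) ▸ le_abs_self _
        _ ≤ A * A := mul_le_mul (hA s) (hA t) (abs_nonneg _) ((abs_nonneg _).trans (hA s))
        _ = A ^ 2 := (sq A).symm
    have hcc : c s t ^ 2 ≤ ρ (Nat.dist s t) ^ 2 :=
      sq_le_sq' (abs_le.1 (hc s t)).1 (abs_le.1 (hc s t)).2
    calc a s * a t * c s t ^ 2 ≤ A ^ 2 * c s t ^ 2 := by gcongr
      _ ≤ A ^ 2 * ρ (Nat.dist s t) ^ 2 := by gcongr
  calc ∑ s, ∑ t, a s * a t * c s t ^ 2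
      ≤ ∑ s : Fin n, A ^ 2 * ∑ t : Fin n, ρ (Nat.dist s t) ^ 2 := by
        simp_rw [Finset.mul_sum]
        exact Finset.sum_le_sum fun s _ ↦ Finset.sum_le_sum fun t _ ↦ hterm s t
    _ ≤ ∑ _s : Fin n, A ^ 2 * R := by gcongr with s; exact hrow s
    _ = n * (A ^ 2 * R) := by simp

theorem variance_weighted_sq_gaussian_general {Ω : Type*} [MeasurableSpace Ω] (μ : Measure Ω)
    [IsProbabilityMeasure μ] (n : ℕ) (Z : Fin n → Ω → ℝ)
    (hgauss : ∀ a : Fin n → ℝ, ∃ v : NNReal,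
      Measure.map (fun ω => ∑ t, a t * Z t ω) μ = gaussianReal 0 v)
    (ρ : ℕ → ℝ) (hsum : Summable fun τ => (ρ τ) ^ 2)
    (hcov : ∀ s t : Fin n,
      |(∫ ω, Z s ω * Z t ω ∂μ) - (∫ ω, Z s ω ∂μ) * ∫ ω, Z t ω ∂μ| ≤
        ρ (Nat.dist (s : ℕ) (t : ℕ)))
    (a : Fin n → ℝ) (A : ℝ) (hA : ∀ t, |a t| ≤ A) :
    variance (fun ω => (Real.sqrt n)⁻¹ * ∑ t, a t * (Z t ω) ^ 2) μ ≤
      2 * A ^ 2 * ((ρ 0) ^ 2 + 2 * ∑' τ : ℕ, (ρ (τ + 1)) ^ 2) := by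
  have hmean (t : Fin n) : ∫ ω, Z t ω ∂μ = 0 := by
    obtain ⟨v, hv⟩ := hgauss (Pi.single t 1)
    simp only [Pi.single_apply, ite_mul, one_mul, zero_mul, Finset.sum_ite_eq',
      Finset.mem_univ, if_true] at hv
    rw [(hasLaw_of_map_eq hv).integral_eq, integral_id_gaussianReal]
  have hcorr (s t : Fin n) : |∫ ω, Z s ω * Z t ω ∂μ| ≤ ρ (Nat.dist s t) := by
    simpa [hmean] using hcov s t
  rw [variance_const_mul, variance_sum_mul_sq_of_gaussian hgauss, inv_pow,
    sq_sqrt n.cast_nonneg]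
  calc (n : ℝ)⁻¹ * (2 * ∑ s, ∑ t, a s * a t * (∫ ω, Z s ω * Z t ω ∂μ) ^ 2)
      ≤ (n : ℝ)⁻¹ * (2 * (n * (A ^ 2 * (ρ 0 ^ 2 + 2 * ∑' τ, ρ (τ + 1) ^ 2)))) := by
        gcongr
        exact sum_sum_mul_mul_sq_le hsum hA hcorr
    _ = ((n : ℝ)⁻¹ * n) * (2 * A ^ 2 * (ρ 0 ^ 2 + 2 * ∑' τ, ρ (τ + 1) ^ 2)) := by ring
    _ ≤ 2 * A ^ 2 * (ρ 0 ^ 2 + 2 * ∑' τ, ρ (τ + 1) ^ 2) :=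
        mul_le_of_le_one_left (by positivity) inv_mul_le_one

/-- **Variance bound for weighted sums of squares of correlated standard Gaussians.**
If `(Z_1, …, Z_n)` is a centered jointly Gaussian vector with unit variances and
`|Cov(Z_s, Z_t)| ≤ ρ(|s − t|)` where `ρ²_∞ = ρ(0)² + 2·Σ_{τ≥1} ρ(τ)² < ∞`, then for
coefficients with `max_t |a_t| ≤ A`,
`Var(n^{−1/2} Σ_t a_t Z_t²) ≤ 2·A²·ρ²_∞`. -/
theorem variance_weighted_sq_gaussian {Ω : Type*} [MeasurableSpace Ω] (μ : Measure Ω)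
    [IsProbabilityMeasure μ] (n : ℕ) (hn : 1 ≤ n) (Z : Fin n → Ω → ℝ)
    (hmeas : ∀ t, Measurable (Z t))
    (hgauss : ∀ a : Fin n → ℝ, ∃ v : NNReal,
      Measure.map (fun ω => ∑ t, a t * Z t ω) μ = gaussianReal 0 v)
    (hvar : ∀ t, variance (Z t) μ = 1)
    (ρ : ℕ → ℝ) (hρpos : ∀ τ, 0 ≤ ρ τ) (hsum : Summable fun τ => (ρ τ) ^ 2)
    (hcov : ∀ s t : Fin n,
      |(∫ ω, Z s ω * Z t ω ∂μ) - (∫ ω, Z s ω ∂μ) * ∫ ω, Z t ω ∂μ| ≤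
        ρ (Nat.dist (s : ℕ) (t : ℕ)))
    (a : Fin n → ℝ) (A : ℝ) (hA : ∀ t, |a t| ≤ A) :
    variance (fun ω => (Real.sqrt n)⁻¹ * ∑ t, a t * (Z t ω) ^ 2) μ ≤
      2 * A ^ 2 * ((ρ 0) ^ 2 + 2 * ∑' τ : ℕ, (ρ (τ + 1)) ^ 2) :=
  variance_weighted_sq_gaussian_general μ n Z hgauss ρ hsum hcov a A hA
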